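/- arXiv:2208.14370 — 2 statements merged into one kernel-verified Lean document; each statement's English description precedes it below -/
import Mathlib

section
/- Let n ≥ 1 be an integer and R > 0. Then lim_{a→0⁺} [ ∫_{{y ∈ ℝ^{2n} : ‖y‖² < 2a}} (e^{−‖y‖²/(2a)} − 1)·‖y‖^{−2n} dλ(y) + ∫_{{y ∈ ℝ^{2n} : 2a < ‖y‖² < R²}} e^{−‖y‖²/(2a)}·‖y‖^{−2n} dλ(y) ] = −γ · vol(S^{2n−1})/2, where γ is the Euler–Mascheroni constant. -/
open MeasureTheory Filter

/-- The volume of the unit sphere `S^{2n-1} ⊂ ℝ^{2n}`. -/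
noncomputable def volSphere (n : ℕ) : ℝ := 2 * Real.pi ^ n / (Nat.factorial (n - 1))

/-!
After polar coordinates and the substitution `t = ‖y‖² / (2a)`, the expression equals
`volSphere n / 2` times `∫₀¹ (e⁻ᵗ - 1) / t dt + ∫₁^{R²/(2a)} e⁻ᵗ / t dt`, which tends to
`∫₀¹ (e⁻ᵗ - 1) / t dt + ∫₁^∞ e⁻ᵗ / t dt` as `a → 0⁺`. Integrating by parts against `log t`
turns this into `∫₀^∞ log t · e⁻ᵗ dt = Γ'(1) = -γ`.
-/

open Set Real Topology Module

theorem integral_log_mul_exp_neg_Ioi :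
    ∫ t in Ioi (0 : ℝ), log t * exp (-t) = -eulerMascheroniConstant := by
  have hGamma : HasDerivAt Complex.Gamma
      (∫ t : ℝ in Ioi 0, (t : ℂ) ^ ((1 : ℂ) - 1) * (log t * exp (-t))) 1 := by
    refine (Complex.hasDerivAt_GammaIntegral (by simp)).congr_of_eventuallyEq ?_
    filter_upwards [(isOpen_lt continuous_const Complex.continuous_re).mem_nhds
      (show (0 : ℝ) < (1 : ℂ).re by simp)] with s hs using Complex.Gamma_eq_integral hs
  have := hGamma.unique Complex.hasDerivAt_Gamma_one
  simp only [sub_self, Complex.cpow_zero, one_mul] at this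
  rw [← Complex.ofReal_inj, ← integral_complex_ofReal]
  exact_mod_cast this

theorem integrableOn_log_mul_exp_neg_Ioc : IntegrableOn (fun t ↦ log t * exp (-t)) (Ioc 0 1) :=
  (intervalIntegrable_iff_integrableOn_Ioc_of_le zero_le_one).mp <|
    intervalIntegral.intervalIntegrable_log'.mul_continuousOn (by fun_prop)

theorem integrableOn_log_mul_exp_neg_Ioi_one : IntegrableOn (fun t ↦ log t * exp (-t)) (Ioi 1) := by
  refine ((GammaIntegral_convergent two_pos).mono_set (Ioi_subset_Ioi zero_le_one)).mono'
    (by fun_prop) ?_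
  filter_upwards [ae_restrict_mem measurableSet_Ioi] with t (ht : 1 < t)
  rw [norm_mul, norm_of_nonneg (log_nonneg ht.le), norm_of_nonneg (exp_pos _).le, mul_comm,
    show (2 : ℝ) - 1 = 1 by norm_num, rpow_one]
  exact mul_le_mul_of_nonneg_left ((log_le_sub_one_of_pos (by linarith)).trans (by linarith))
    (exp_pos _).le

theorem abs_exp_neg_sub_one_le {t : ℝ} (ht : |t| ≤ 1) : |exp (-t) - 1| ≤ 2 * |t| := by
  simpa using abs_exp_sub_one_le (x := -t) (by rwa [abs_neg])

theorem integrableOn_exp_neg_sub_one_div_Ioc :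
    IntegrableOn (fun t ↦ (exp (-t) - 1) / t) (Ioc 0 1) := by
  refine Measure.integrableOn_of_bounded measure_Ioc_lt_top.ne
    (Measurable.aestronglyMeasurable (by fun_prop)) (M := 2) ?_
  filter_upwards [ae_restrict_mem measurableSet_Ioc] with t ⟨ht0, ht1⟩
  rw [norm_div]
  exact div_le_of_le_mul₀ (norm_nonneg _) zero_le_two
    (abs_exp_neg_sub_one_le (abs_le.mpr ⟨by linarith, ht1⟩))

theorem integral_exp_neg_sub_one_div_Ioc :
    ∫ t in Ioc 0 1, (exp (-t) - 1) / t = ∫ t in Ioc 0 1, log t * exp (-t) := by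
  set G : ℝ → ℝ := fun t ↦ log t * (exp (-t) - 1)
  -- `G 0 = 0` because `log 0 = 0` in Mathlib, and `|G t| ≤ 2 |t log t|` makes `G` continuous there.
  have hG0 : ContinuousAt G 0 := by
    have hbound : ∀ᶠ t in 𝓝 (0 : ℝ), ‖G t‖ ≤ 2 * ‖t * log t‖ := by
      filter_upwards [Metric.closedBall_mem_nhds (0 : ℝ) one_pos] with t ht
      calc ‖G t‖ ≤ ‖log t‖ * (2 * ‖t‖) := by
            rw [norm_mul]
            exact mul_le_mul_of_nonneg_left (abs_exp_neg_sub_one_le (by simpa using ht))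
              (norm_nonneg _)
        _ = 2 * ‖t * log t‖ := by rw [norm_mul]; ring
    have h := (continuous_mul_log.tendsto 0).norm.const_mul 2
    simp only [zero_mul, norm_zero, mul_zero] at h
    simpa [ContinuousAt, G] using squeeze_zero_norm' hbound h
  have hcont : ContinuousOn G (Icc 0 1) := by
    intro t ht
    rcases ht.1.eq_or_lt with rfl | ht0
    · exact hG0.continuousWithinAt
    · exact ((continuousAt_log ht0.ne').mul (by fun_prop)).continuousWithinAt
  have hderiv : ∀ t ∈ Ioo (0 : ℝ) 1, HasDerivAt G ((exp (-t) - 1) / t - log t * exp (-t)) t := by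
    intro t ht
    exact ((hasDerivAt_log ht.1.ne').fun_mul ((hasDerivAt_neg t).exp.sub_const 1)).congr_deriv
      (by field_simp; ring)
  have hint := integrableOn_exp_neg_sub_one_div_Ioc.sub integrableOn_log_mul_exp_neg_Ioc
  have := intervalIntegral.integral_eq_sub_of_hasDerivAt_of_le zero_le_one hcont hderiv
    ((intervalIntegrable_iff_integrableOn_Ioc_of_le zero_le_one).mpr hint)
  rw [intervalIntegral.integral_of_le zero_le_one, integral_sub integrableOn_exp_neg_sub_one_div_Ioc
    integrableOn_log_mul_exp_neg_Ioc] at this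
  simp only [log_one, zero_mul, log_zero, neg_zero, exp_zero, sub_self, mul_zero, G] at this
  linarith

theorem integrableOn_exp_neg_div_Ioi_one : IntegrableOn (fun t ↦ exp (-t) / t) (Ioi 1) := by
  refine (exp_neg_integrableOn_Ioi 1 one_pos).mono'
    (Measurable.aestronglyMeasurable (by fun_prop)) ?_
  filter_upwards [ae_restrict_mem measurableSet_Ioi] with t (ht : 1 < t)
  rw [norm_div, norm_of_nonneg (exp_pos _).le, norm_of_nonneg (by linarith), neg_one_mul]
  exact div_le_self (exp_pos _).le ht.le

theorem integral_exp_neg_div_Ioi_one :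
    ∫ t in Ioi 1, exp (-t) / t = ∫ t in Ioi 1, log t * exp (-t) := by
  have hderiv : ∀ t ∈ Ici (1 : ℝ), HasDerivAt (fun t ↦ log t * exp (-t))
      (exp (-t) / t - log t * exp (-t)) t := by
    intro t (ht : 1 ≤ t)
    exact ((hasDerivAt_log (by linarith)).fun_mul (hasDerivAt_neg t).exp).congr_deriv
      (by field_simp; ring)
  have hlim : Tendsto (fun t ↦ log t * exp (-t)) atTop (𝓝 0) :=
    (isLittleO_log_id_atTop.mul_isBigO (Asymptotics.isBigO_refl (fun t ↦ exp (-t)) _)).trans_tendsto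
      (by simpa using tendsto_pow_mul_exp_neg_atTop_nhds_zero 1)
  have := integral_Ioi_of_hasDerivAt_of_tendsto' hderiv
    (integrableOn_exp_neg_div_Ioi_one.sub integrableOn_log_mul_exp_neg_Ioi_one) hlim
  rw [integral_sub integrableOn_exp_neg_div_Ioi_one integrableOn_log_mul_exp_neg_Ioi_one] at this
  simp only [log_one, zero_mul, sub_self] at this
  linarith

theorem integral_exp_neg_sub_one_div_add_integral_exp_neg_div :
    (∫ t in Ioo 0 1, (exp (-t) - 1) / t) + ∫ t in Ioi 1, exp (-t) / t
      = -eulerMascheroniConstant := by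
  rw [← integral_Ioc_eq_integral_Ioo, integral_exp_neg_sub_one_div_Ioc,
    integral_exp_neg_div_Ioi_one, ← setIntegral_union (Ioc_disjoint_Ioi le_rfl) measurableSet_Ioi
      integrableOn_log_mul_exp_neg_Ioc integrableOn_log_mul_exp_neg_Ioi_one,
    Ioc_union_Ioi_eq_Ioi zero_le_one, integral_log_mul_exp_neg_Ioi]

theorem integral_comp_mul_left_Ioi_div_self (g : ℝ → ℝ) {b : ℝ} (hb : 0 < b) :
    ∫ t in Ioi 0, g (b * t) / t = ∫ t in Ioi 0, g t / t := by
  have h := integral_comp_mul_left_Ioi (fun t ↦ g t / t) 0 hb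
  rw [mul_zero, smul_eq_mul] at h
  rw [← mul_right_inj' (inv_ne_zero hb.ne'), ← h, ← integral_const_mul]
  refine setIntegral_congr_fun measurableSet_Ioi fun t _ ↦ ?_
  field_simp

theorem integral_comp_sq_Ioi_div_self (g : ℝ → ℝ) :
    ∫ r in Ioi 0, g (r ^ 2) / r = (∫ t in Ioi 0, g t / t) / 2 := by
  rw [← integral_comp_rpow_Ioi_of_pos (g := fun t ↦ g t / t) two_pos, eq_div_iff two_ne_zero,
    ← integral_mul_const]
  refine setIntegral_congr_fun measurableSet_Ioi fun r (hr : 0 < r) ↦ ?_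
  rw [smul_eq_mul, show (2 : ℝ) - 1 = 1 by norm_num, rpow_one, rpow_two]
  field_simp

section Radial

variable {E : Type*} [NormedAddCommGroup E] [InnerProductSpace ℝ E] [FiniteDimensional ℝ E]
  [MeasurableSpace E] [BorelSpace E] {n : ℕ}

theorem integral_fun_norm_of_finrank_eq_two_mul (hn : 1 ≤ n) (hE : finrank ℝ E = 2 * n)
    (f : ℝ → ℝ) :
    ∫ y : E, f ‖y‖ = volSphere n * ∫ r in Ioi 0, r ^ (2 * n - 1) * f r := by
  have : Nontrivial E := Module.nontrivial_of_finrank_pos (R := ℝ) (by omega)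
  have hball : volume.real (Metric.ball (0 : E) 1) = π ^ n / n.factorial := by
    rw [measureReal_def, InnerProductSpace.volume_ball, hE, ENNReal.ofReal_one, one_pow, one_mul,
      ENNReal.toReal_ofReal (by positivity)]
    push_cast
    rw [show (2 * n : ℝ) / 2 + 1 = n + 1 by ring, Gamma_nat_eq_factorial, pow_mul,
      sq_sqrt pi_nonneg]
  rw [integral_fun_norm_addHaar, hE, hball, nsmul_eq_mul, smul_eq_mul, ← mul_assoc]
  congr 1
  obtain ⟨m, rfl⟩ := Nat.exists_eq_add_of_le' hn
  rw [volSphere, Nat.add_sub_cancel, Nat.factorial_succ]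
  push_cast
  field_simp

theorem integral_comp_norm_sq_div_mul_inv_pow (hn : 1 ≤ n) (hE : finrank ℝ E = 2 * n)
    {c : ℝ} (hc : 0 < c) (g : ℝ → ℝ) :
    ∫ y : E, g (‖y‖ ^ 2 / c) * (‖y‖ ^ (2 * n))⁻¹ = volSphere n / 2 * ∫ t in Ioi 0, g t / t := by
  have hpolar : ∫ r in Ioi 0, r ^ (2 * n - 1) * (g (r ^ 2 / c) * (r ^ (2 * n))⁻¹)
      = ∫ r in Ioi 0, g (c⁻¹ * r ^ 2) / r := by
    refine setIntegral_congr_fun measurableSet_Ioi fun r (hr : 0 < r) ↦ ?_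
    rw [pow_sub₀ r hr.ne' (by omega : 1 ≤ 2 * n), pow_one]
    field_simp
  rw [integral_fun_norm_of_finrank_eq_two_mul hn hE (fun r ↦ g (r ^ 2 / c) * (r ^ (2 * n))⁻¹),
    hpolar, integral_comp_sq_Ioi_div_self (fun t ↦ g (c⁻¹ * t)),
    integral_comp_mul_left_Ioi_div_self g (inv_pos.mpr hc)]
  ring

theorem setIntegral_comp_norm_sq_div_mul_inv_pow (hn : 1 ≤ n) (hE : finrank ℝ E = 2 * n)
    {c : ℝ} (hc : 0 < c) (g : ℝ → ℝ) {S : Set ℝ} (hS : MeasurableSet S) :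
    ∫ y in {y : E | ‖y‖ ^ 2 / c ∈ S}, g (‖y‖ ^ 2 / c) * (‖y‖ ^ (2 * n))⁻¹
      = volSphere n / 2 * ∫ t in S ∩ Ioi 0, g t / t := by
  have hmeas : MeasurableSet {y : E | ‖y‖ ^ 2 / c ∈ S} := hS.preimage (by fun_prop)
  have hind : ∀ t, S.indicator g t / t = S.indicator (fun t ↦ g t / t) t := by
    intro t
    by_cases ht : t ∈ S <;> simp [ht]
  rw [← integral_indicator hmeas, ← Measure.restrict_restrict hS, ← integral_indicator hS]
  simp_rw [← hind]
  rw [← integral_comp_norm_sq_div_mul_inv_pow hn hE hc]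
  congr 1 with y
  by_cases hy : ‖y‖ ^ 2 / c ∈ S <;> simp [hy]

theorem setIntegral_norm_sq_lt_exp_neg_sub_one_mul_inv_pow (hn : 1 ≤ n)
    (hE : finrank ℝ E = 2 * n) {a : ℝ} (ha : 0 < a) :
    ∫ y in {y : E | ‖y‖ ^ 2 < 2 * a}, (exp (-‖y‖ ^ 2 / (2 * a)) - 1) * (‖y‖ ^ (2 * n))⁻¹
      = volSphere n / 2 * ∫ t in Ioo 0 1, (exp (-t) - 1) / t := by
  have hc : 0 < 2 * a := by positivity
  have := setIntegral_comp_norm_sq_div_mul_inv_pow hn hE hc (fun t ↦ exp (-t) - 1)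
    (measurableSet_Iio (a := 1))
  rw [Iio_inter_Ioi] at this
  convert this using 3
  · ext y
    simp [div_lt_one hc]
  · simp [neg_div]

theorem setIntegral_norm_sq_mem_Ioo_exp_neg_mul_inv_pow (hn : 1 ≤ n)
    (hE : finrank ℝ E = 2 * n) {a : ℝ} (ha : 0 < a) (R : ℝ) :
    ∫ y in {y : E | 2 * a < ‖y‖ ^ 2 ∧ ‖y‖ ^ 2 < R ^ 2}, exp (-‖y‖ ^ 2 / (2 * a)) * (‖y‖ ^ (2 * n))⁻¹
      = volSphere n / 2 * ∫ t in Ioo 1 (R ^ 2 / (2 * a)), exp (-t) / t := by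
  have hc : 0 < 2 * a := by positivity
  have := setIntegral_comp_norm_sq_div_mul_inv_pow hn hE hc (fun t ↦ exp (-t))
    (measurableSet_Ioo (a := 1) (b := R ^ 2 / (2 * a)))
  rw [inter_eq_left.mpr (Ioo_subset_Ioi_self.trans (Ioi_subset_Ioi zero_le_one))] at this
  convert this using 3
  · ext y
    simp [one_lt_div hc, div_lt_div_iff_of_pos_right hc]
  · simp [neg_div]

end Radial

/-- The limit statement of Proposition 5.4(2) (with `A` the identity). -/
theorem stmt_5 (n : ℕ) (hn : 1 ≤ n) (R : ℝ) (hR : 0 < R) :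
    Tendsto (fun a : ℝ =>
        (∫ y in {y : EuclideanSpace ℝ (Fin (2 * n)) | ‖y‖ ^ 2 < 2 * a},
            (Real.exp (-‖y‖ ^ 2 / (2 * a)) - 1) * (‖y‖ ^ (2 * n))⁻¹)
        + ∫ y in {y : EuclideanSpace ℝ (Fin (2 * n)) | 2 * a < ‖y‖ ^ 2 ∧ ‖y‖ ^ 2 < R ^ 2},
            Real.exp (-‖y‖ ^ 2 / (2 * a)) * (‖y‖ ^ (2 * n))⁻¹)
      (nhdsWithin 0 (Set.Ioi 0))
      (nhds (-Real.eulerMascheroniConstant * volSphere n / 2)) := by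
  have hE : finrank ℝ (EuclideanSpace ℝ (Fin (2 * n))) = 2 * n := by simp
  have hT : Tendsto (fun a : ℝ ↦ R ^ 2 / (2 * a)) (𝓝[>] 0) atTop := by
    refine (tendsto_inv_nhdsGT_zero.const_mul_atTop (by positivity : 0 < R ^ 2 / 2)).congr
      fun a ↦ ?_
    field_simp
  have htail : Tendsto (fun a ↦ ∫ t in Ioo 1 (R ^ 2 / (2 * a)), exp (-t) / t) (𝓝[>] 0)
      (𝓝 (∫ t in Ioi 1, exp (-t) / t)) := by
    refine (intervalIntegral_tendsto_integral_Ioi 1 integrableOn_exp_neg_div_Ioi_one hT).congr' ?_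
    filter_upwards [hT.eventually_ge_atTop 1] with a ha
    rw [intervalIntegral.integral_of_le ha, integral_Ioc_eq_integral_Ioo]
  rw [show -eulerMascheroniConstant * volSphere n / 2 = volSphere n / 2 * -eulerMascheroniConstant
    by ring, ← integral_exp_neg_sub_one_div_add_integral_exp_neg_div]
  refine ((tendsto_const_nhds.add htail).const_mul _).congr' ?_
  filter_upwards [self_mem_nhdsWithin] with a (ha : 0 < a)
  rw [setIntegral_norm_sq_lt_exp_neg_sub_one_mul_inv_pow hn hE ha,
    setIntegral_norm_sq_mem_Ioo_exp_neg_mul_inv_pow hn hE ha, mul_add]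
end

section
/- Let ℓ ∈ ℤ and let (φ_m)_{m≥−1} be the unique real coefficients such that cos((ℓ+1)s/2)/(s·sin(s/2)) = Σ_{m≥−1} φ_m s^{2m} for all 0 < |s| < 2π. Then for every t ∈ (0, 2π), the function r ↦ [ r·cos((ℓ+1)tr/2)/sin(tr/2) − cos((ℓ+1)t/2)/sin(t/2) ] / (t(1−r²)) (extended continuously to r = ±1 and r = 0) is integrable on [−1, 1], the series Σ_{m≥0} φ_m (2·H_{2m+1} − H_m) t^{2m} converges absolutely, and ∫_{−1}^1 [ r·cos((ℓ+1)tr/2)/sin(tr/2) − cos((ℓ+1)t/2)/sin(t/2) ] / (t(1−r²)) dr = −Σ_{m≥0} φ_m (2·H_{2m+1} − H_m) t^{2m}. -/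
/-!
Write `G(s) = s cos((ℓ+1)s/2) / sin(s/2) = Σ_k φ_{k-1} s^{2k}`. Since
`G(tr) / t = r cos((ℓ+1)tr/2) / sin(tr/2)`, the integrand is `(G(tr) - G(t)) / (t²(1 - r²))`, and
`((r²)^k - 1) / (1 - r²) = -Σ_{j<k} r^{2j}` turns it into `-Σ_m φ_m t^{2m} Σ_{j≤m} r^{2j}`.
The series for `G` also converges at some `ρ ∈ (t, 2π)`, so these terms are bounded on `[-1, 1]` by
`(m + 1) |φ_m| t^{2m}`, which is summable; hence the series may be integrated termwise, with
`∫_{-1}^1 Σ_{j≤m} r^{2j} dr = Σ_{j≤m} 2/(2j+1) = 2 H_{2m+1} - H_m`.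
-/

open MeasureTheory Real

/-- The `m`-th harmonic number `H_m = Σ_{j=1}^m 1/j`, with `H_0 = 0`. -/
noncomputable def harmonicNum (m : ℕ) : ℝ := ∑ j ∈ Finset.range m, 1 / ((j : ℝ) + 1)

open Filter Finset

lemma harmonicNum_succ (m : ℕ) : harmonicNum (m + 1) = harmonicNum m + 1 / ((m : ℝ) + 1) := by
  simp [harmonicNum, sum_range_succ]

lemma sum_range_two_div_two_mul_add_one (m : ℕ) :
    ∑ j ∈ range (m + 1), 2 / (2 * (j : ℝ) + 1) = 2 * harmonicNum (2 * m + 1) - harmonicNum m := by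
  induction m with
  | zero => norm_num [harmonicNum]
  | succ n ih =>
    rw [sum_range_succ, ih, show 2 * (n + 1) + 1 = 2 * n + 1 + 1 + 1 by ring,
      harmonicNum_succ (2 * n + 1 + 1), harmonicNum_succ (2 * n + 1), harmonicNum_succ n]
    push_cast
    field_simp
    ring

lemma abs_two_mul_harmonicNum_sub_le (m : ℕ) :
    |2 * harmonicNum (2 * m + 1) - harmonicNum m| ≤ 2 * ((m : ℝ) + 1) := by
  rw [← sum_range_two_div_two_mul_add_one]
  calc _ ≤ ∑ j ∈ range (m + 1), |2 / (2 * (j : ℝ) + 1)| := abs_sum_le_sum_abs _ _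
    _ ≤ ∑ _j ∈ range (m + 1), (2 : ℝ) := sum_le_sum fun j _ => by
        rw [abs_of_pos (by positivity), div_le_iff₀ (by positivity)]
        linarith [j.cast_nonneg (α := ℝ)]
    _ = 2 * ((m : ℝ) + 1) := by simp [mul_comm]

lemma abs_mul_geom_sum_le (c : ℝ) {y : ℝ} (hy : |y| ≤ 1) (n : ℕ) :
    |c * ∑ j ∈ range n, y ^ j| ≤ n * |c| := by
  rw [abs_mul, mul_comm]
  gcongr
  calc _ ≤ ∑ j ∈ range n, |y ^ j| := abs_sum_le_sum_abs _ _
    _ ≤ ∑ _j ∈ range n, (1 : ℝ) := sum_le_sum fun j _ => by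
        rw [abs_pow]; exact pow_le_one₀ (abs_nonneg y) hy
    _ = n := by simp

lemma integral_Ioo_neg_one_one_sq_pow (j : ℕ) :
    ∫ r in Set.Ioo (-1 : ℝ) 1, (r ^ 2) ^ j = 2 / (2 * (j : ℝ) + 1) := by
  rw [← integral_Ioc_eq_integral_Ioo, ← intervalIntegral.integral_of_le (by norm_num)]
  simp_rw [← pow_mul]
  rw [integral_pow, Odd.neg_one_pow ⟨j, by ring⟩, one_pow]
  push_cast
  ring

lemma integral_Ioo_neg_one_one_geom_sum_sq (m : ℕ) :
    ∫ r in Set.Ioo (-1 : ℝ) 1, ∑ j ∈ range (m + 1), (r ^ 2) ^ j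
      = 2 * harmonicNum (2 * m + 1) - harmonicNum m := by
  rw [integral_finsetSum _ fun j _ => (Continuous.integrableOn_Icc (by fun_prop)).mono_set
    Set.Ioo_subset_Icc_self]
  simp_rw [integral_Ioo_neg_one_one_sq_pow]
  exact sum_range_two_div_two_mul_add_one m

lemma summable_succ_mul_abs_mul_pow {a : ℕ → ℝ} {x y : ℝ} (h : Summable fun n => a n * y ^ n)
    (hxy : |x| < |y|) : Summable fun n : ℕ => ((n : ℝ) + 1) * |a n * x ^ n| := by
  obtain ⟨C, hC⟩ := h.tendsto_atTop_zero.abs.bddAbove_range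
  have hy : 0 < |y| := (abs_nonneg x).trans_lt hxy
  set q := |x| / |y|
  have hq : ‖q‖ < 1 := by
    rwa [Real.norm_eq_abs, abs_div, abs_abs, abs_abs, div_lt_one hy]
  have hgeom : Summable fun n : ℕ => C * (((n : ℝ) + 1) * q ^ n) := by
    simpa [add_mul] using ((summable_pow_mul_geometric_of_norm_lt_one 1 hq).add
      (summable_geometric_of_norm_lt_one hq)).mul_left C
  refine hgeom.of_nonneg_of_le (fun n => by positivity) fun n => ?_
  have hterm : |a n * x ^ n| = |a n * y ^ n| * q ^ n := by
    rw [abs_mul, abs_mul, abs_pow, abs_pow, div_pow, mul_assoc,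
      mul_div_cancel₀ _ (pow_pos hy n).ne']
  rw [hterm]
  calc ((n : ℝ) + 1) * (|a n * y ^ n| * q ^ n) ≤ ((n : ℝ) + 1) * (C * q ^ n) := by
        gcongr
        exact hC ⟨n, rfl⟩
    _ = C * (((n : ℝ) + 1) * q ^ n) := by ring

lemma HasSum.mul_sq_of_laurent {a : ℕ → ℝ} {s c σ : ℝ} (hs : s ≠ 0)
    (h : HasSum (fun k : ℕ => a k * s ^ (2 * (k : ℤ) - 2)) (c / (s * σ))) :
    HasSum (fun k => a k * (s ^ 2) ^ k) (s * (c / σ)) := by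
  have hk (k : ℕ) : a k * s ^ (2 * (k : ℤ) - 2) * s ^ 2 = a k * (s ^ 2) ^ k := by
    rw [← pow_mul, ← zpow_natCast s (2 * k), mul_assoc, ← zpow_natCast s 2, ← zpow_add₀ hs]
    push_cast
    ring_nf
  have hsum : c / (s * σ) * s ^ 2 = s * (c / σ) := by field_simp
  rw [← hsum, ← funext hk]
  exact h.mul_right _

lemma hasSum_neg_mul_geom_sum {a : ℕ → ℝ} {x y A B : ℝ} (hx : x ≠ 0) (hy : y ≠ 1)
    (hA : HasSum (fun k => a k * (x * y) ^ k) A) (hB : HasSum (fun k => a k * x ^ k) B) :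
    HasSum (fun m => -(a (m + 1) * x ^ m * ∑ j ∈ range (m + 1), y ^ j))
      ((A - B) / (x * (1 - y))) := by
  have hm (m : ℕ) : (a (m + 1) * (x * y) ^ (m + 1) - a (m + 1) * x ^ (m + 1)) / (x * (1 - y))
      = -(a (m + 1) * x ^ m * ∑ j ∈ range (m + 1), y ^ j) := by
    rw [div_eq_iff (mul_ne_zero hx (sub_ne_zero.mpr hy.symm))]
    linear_combination (-a (m + 1) * x ^ (m + 1)) * geom_sum_mul y (m + 1)
  simpa [hm] using (hasSum_nat_add_iff' 1).mpr ((hA.sub hB).div_const (x * (1 - y)))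

lemma summable_succ_mul_abs_mul_sq_pow {a : ℕ → ℝ} {R t : ℝ}
    (h : ∀ s : ℝ, s ≠ 0 → |s| < R → Summable fun k => a k * (s ^ 2) ^ k) (ht : |t| < R) :
    Summable fun m : ℕ => ((m : ℝ) + 1) * |a (m + 1) * (t ^ 2) ^ m| := by
  obtain ⟨ρ, htρ, hρR⟩ : ∃ ρ, |t| < ρ ∧ ρ < R := ⟨(|t| + R) / 2, by linarith, by linarith⟩
  have hρ0 : 0 < ρ := (abs_nonneg t).trans_lt htρ
  refine summable_succ_mul_abs_mul_pow (y := ρ ^ 2) ?_ ?_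
  · refine (((summable_nat_add_iff 1).2 (h ρ hρ0.ne' (by rwa [abs_of_pos hρ0]))).div_const
      (ρ ^ 2)).congr fun n => ?_
    rw [pow_succ]
    field_simp
  · rw [abs_pow, abs_pow, abs_of_pos hρ0]
    gcongr

lemma hasSum_div_one_sub_sq_of_hasSum_sq_pow {a : ℕ → ℝ} {F : ℝ → ℝ} {R t r : ℝ}
    (hF : ∀ s : ℝ, s ≠ 0 → |s| < R → HasSum (fun k => a k * (s ^ 2) ^ k) (s * F s))
    (ht0 : t ≠ 0) (ht : |t| < R) (hr0 : r ≠ 0) (hr : |r| < 1) :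
    HasSum (fun m => -(a (m + 1) * (t ^ 2) ^ m * ∑ j ∈ range (m + 1), (r ^ 2) ^ j))
      ((r * F (t * r) - F t) / (t * (1 - r ^ 2))) := by
  have htr : |t * r| < R := by
    rw [abs_mul]
    exact (mul_lt_of_lt_one_right (abs_pos.2 ht0) hr).trans ht
  have h := hasSum_neg_mul_geom_sum (pow_ne_zero 2 ht0) ((sq_lt_one_iff_abs_lt_one r).2 hr).ne
    (by simpa only [mul_pow] using hF (t * r) (mul_ne_zero ht0 hr0) htr) (hF t ht0 ht)
  convert h using 1
  field_simp

lemma integrable_and_hasSum_integral_of_norm_le {α E : Type*} [MeasurableSpace α]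
    {μ : Measure α} [IsFiniteMeasure μ] [NormedAddCommGroup E] [NormedSpace ℝ E]
    {F : ℕ → α → E} {f : α → E} {u : ℕ → ℝ} (hF : ∀ n, AEStronglyMeasurable (F n) μ)
    (hu : Summable u) (hFu : ∀ n, ∀ᵐ x ∂μ, ‖F n x‖ ≤ u n)
    (hf : ∀ᵐ x ∂μ, HasSum (fun n => F n x) (f x)) :
    Integrable f μ ∧ HasSum (fun n => ∫ x, F n x ∂μ) (∫ x, f x ∂μ) := by
  refine ⟨.of_bound ?_ (∑' n, u n) ?_, hasSum_integral_of_dominated_convergence (fun n _ => u n)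
    hF hFu (.of_forall fun _ => hu) (integrable_const _) hf⟩
  · exact aestronglyMeasurable_of_tendsto_ae atTop
      (fun N => Finset.aestronglyMeasurable_fun_sum (range N) fun n _ => hF n)
      (hf.mono fun x hx => hx.tendsto_sum_nat)
  · filter_upwards [hf, ae_all_iff.2 hFu] with x hx hxu
    exact hx.norm_le_of_bounded hu.hasSum hxu

/-- `ψ k = φ_{k-1}`: the Laurent coefficients `(φ_m)_{m ≥ -1}` are indexed by `k = m + 1 : ℕ`. -/
theorem stmt_10 (ℓ : ℤ) (ψ : ℕ → ℝ)
    (hψ : ∀ s : ℝ, s ≠ 0 → |s| < 2 * π →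
      HasSum (fun k : ℕ => ψ k * s ^ (2 * (k : ℤ) - 2))
        (Real.cos (((ℓ : ℝ) + 1) * s / 2) / (s * Real.sin (s / 2))))
    (t : ℝ) (ht : t ∈ Set.Ioo 0 (2 * π)) :
    IntegrableOn
      (fun r : ℝ =>
        (r * Real.cos (((ℓ : ℝ) + 1) * t * r / 2) / Real.sin (t * r / 2)
            - Real.cos (((ℓ : ℝ) + 1) * t / 2) / Real.sin (t / 2)) / (t * (1 - r ^ 2)))
      (Set.Ioo (-1) 1) ∧
    Summable (fun m : ℕ =>
      |ψ (m + 1) * (2 * harmonicNum (2 * m + 1) - harmonicNum m) * t ^ (2 * m)|) ∧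
    ∫ r in Set.Ioo (-1 : ℝ) 1,
        (r * Real.cos (((ℓ : ℝ) + 1) * t * r / 2) / Real.sin (t * r / 2)
            - Real.cos (((ℓ : ℝ) + 1) * t / 2) / Real.sin (t / 2)) / (t * (1 - r ^ 2))
      = -∑' m : ℕ, ψ (m + 1) * (2 * harmonicNum (2 * m + 1) - harmonicNum m) * t ^ (2 * m) := by
  obtain ⟨ht0, ht2π⟩ := ht
  have hG (s : ℝ) (hs : s ≠ 0) (hs2π : |s| < 2 * π) : HasSum (fun k => ψ k * (s ^ 2) ^ k)
      (s * (cos (((ℓ : ℝ) + 1) * s / 2) / sin (s / 2))) := (hψ s hs hs2π).mul_sq_of_laurent hs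
  have ht : |t| < 2 * π := by rwa [abs_of_pos ht0]
  have hu := summable_succ_mul_abs_mul_sq_pow (fun s hs hs2π => (hG s hs hs2π).summable) ht
  have hlim : ∀ᵐ r ∂volume.restrict (Set.Ioo (-1 : ℝ) 1), HasSum
      (fun m => -(ψ (m + 1) * (t ^ 2) ^ m * ∑ j ∈ range (m + 1), (r ^ 2) ^ j))
      ((r * cos (((ℓ : ℝ) + 1) * t * r / 2) / sin (t * r / 2)
        - cos (((ℓ : ℝ) + 1) * t / 2) / sin (t / 2)) / (t * (1 - r ^ 2))) := by
    filter_upwards [ae_restrict_of_ae (Measure.ae_ne volume 0),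
      ae_restrict_mem measurableSet_Ioo] with r hr0 hr
    convert hasSum_div_one_sub_sq_of_hasSum_sq_pow hG ht0.ne' ht hr0 (abs_lt.2 hr) using 1
    ring_nf
  have hbound (m : ℕ) : ∀ᵐ r ∂volume.restrict (Set.Ioo (-1 : ℝ) 1),
      ‖-(ψ (m + 1) * (t ^ 2) ^ m * ∑ j ∈ range (m + 1), (r ^ 2) ^ j)‖
        ≤ ((m : ℝ) + 1) * |ψ (m + 1) * (t ^ 2) ^ m| := by
    refine ae_restrict_of_forall_mem measurableSet_Ioo fun r hr => ?_
    rw [norm_neg, Real.norm_eq_abs]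
    exact_mod_cast abs_mul_geom_sum_le _ (by simpa using (abs_lt.2 hr).le) (m + 1)
  obtain ⟨hint, hsum⟩ := integrable_and_hasSum_integral_of_norm_le
    (fun _ => Continuous.aestronglyMeasurable (by fun_prop)) hu hbound hlim
  refine ⟨hint, ?_, ?_⟩
  · refine (hu.mul_left 2).of_nonneg_of_le (fun _ => abs_nonneg _) fun m => ?_
    rw [pow_mul, abs_mul, abs_mul, abs_mul, mul_right_comm]
    grw [abs_two_mul_harmonicNum_sub_le m]
    exact le_of_eq (by ring)
  · rw [← hsum.tsum_eq, ← tsum_neg]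
    refine tsum_congr fun m => ?_
    rw [integral_neg, integral_const_mul, integral_Ioo_neg_one_one_geom_sum_sq, pow_mul]
    ring
end
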